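/- Let c : [0,L] → L²₁ be a unit-speed time-like convex curve in the Minkowski plane and c̃ : [0,L] → L³₁ a unit-speed time-like curve with k(s) ≥ |k̃(s)|. Then the Minkowski lengths of the chords satisfy |c(L) − c(0)| ≥ |c̃(L) − c̃(0)|, where |u| = √⟨u, u⟩ for a time-like vector u. -/

import Mathlib

open Set intervalIntegral


/-- The Minkowski bilinear form on `L³₁` with signature `(+, −, −)`. -/
def mink (x y : Fin 3 → ℝ) : ℝ := x 0 * y 0 - x 1 * y 1 - x 2 * y 2

lemma mink_orth_spacelike (u x : Fin 3 → ℝ) (hu : mink u u = 1) (hx : mink u x = 0) :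
    mink x x ≤ 0 := by
  simp only [mink] at *
  have h2 : u 0 * x 0 = u 1 * x 1 + u 2 * x 2 := by linarith
  have h3 : (u 0)^2 * (x 0)^2 = (u 1 * x 1 + u 2 * x 2)^2 := by rw [← h2]; ring
  nlinarith [h3, sq_nonneg (u 1 * x 2 - u 2 * x 1), sq_nonneg (x 1), sq_nonneg (x 2),
    sq_nonneg (u 0), sq_nonneg (x 0)]

lemma mink_unit_ge_one (u v : Fin 3 → ℝ) (hu : mink u u = 1) (hv : mink v v = 1)
    (hu0 : 0 < u 0) (hv0 : 0 < v 0) : 1 ≤ mink u v := by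
  simp only [mink] at *
  nlinarith [sq_nonneg (u 1 * v 2 - u 2 * v 1), sq_nonneg (u 0 - v 0), mul_pos hu0 hv0,
    sq_nonneg (u 0 * v 0 - 1 - u 1 * v 1 - u 2 * v 2), sq_nonneg (u 1 - v 1),
    sq_nonneg (u 2 - v 2), sq_nonneg (u 0 * v 0 - 1)]

lemma mink_cs_plane (u w z : Fin 3 → ℝ) (hu : mink u u = 1) (hw : mink u w = 0)
    (hz : mink u z = 0) : mink w z ^ 2 ≤ mink w w * mink z z := by
  have key : ∀ t : ℝ, mink w w + 2 * t * mink w z + t ^ 2 * mink z z ≤ 0 := by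
    intro t
    have h := mink_orth_spacelike u (fun i => w i + t * z i) hu
      (by simp only [mink] at hw hz ⊢; linear_combination hw + t * hz)
    simp only [mink] at h ⊢
    nlinarith [h]
  have hzz : mink z z ≤ 0 := mink_orth_spacelike u z hu hz
  rcases eq_or_lt_of_le hzz with hz0 | hzneg
  · -- mink z z = 0
    have hb : mink w z = 0 := by
      by_contra hb
      have h1 := key ((1 - mink w w) / (2 * mink w z))
      rw [hz0] at h1
      have h2 : 2 * ((1 - mink w w) / (2 * mink w z)) * mink w z = 1 - mink w w := by
        field_simp
      nlinarith [h1, h2]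
    rw [hb, hz0]; norm_num
  · have hne : mink z z ≠ 0 := ne_of_lt hzneg
    have h1 := key (-(mink w z) / mink z z)
    have h2 : 2 * (-(mink w z) / mink z z) * mink w z = -(2 * (mink w z ^ 2 / mink z z)) := by
      field_simp
    have h3 : (-(mink w z) / mink z z) ^ 2 * mink z z = mink w z ^ 2 / mink z z := by
      field_simp
    have h4 : mink w z ^ 2 / mink z z * mink z z = mink w z ^ 2 := div_mul_cancel₀ _ hne
    have ha : mink w w ≤ mink w z ^ 2 / mink z z := by linarith [h1, h2, h3]
    nlinarith [h4, hzneg, ha]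

lemma mink_rev_cs (x v : Fin 3 → ℝ) (hv : mink v v = 1) : mink x x ≤ mink x v ^ 2 := by
  have h := mink_orth_spacelike v (fun i => x i - mink x v * v i) hv
    (by simp only [mink] at hv ⊢;
        linear_combination (-(x 0 * v 0 - x 1 * v 1 - x 2 * v 2)) * hv)
  simp only [mink] at h hv ⊢
  nlinarith [h, hv, sq_nonneg (x 0 * v 0 - x 1 * v 1 - x 2 * v 2)]

open Set in
lemma gron_right (a b : ℝ) (g gd φ k : ℝ → ℝ) (hab : a ≤ b)
    (hg1 : ∀ s ∈ Icc a b, 1 ≤ g s)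
    (hgd : ∀ s ∈ Icc a b, HasDerivAt g (gd s) s)
    (hφd : ∀ s ∈ Icc a b, HasDerivAt φ (k s) s)
    (hk0 : ∀ s ∈ Icc a b, 0 ≤ k s)
    (hbd : ∀ s ∈ Ioo a b, gd s ^ 2 ≤ k s ^ 2 * (g s ^ 2 - 1))
    (hga : g a = 1) :
    ∀ s ∈ Icc a b, g s ≤ Real.cosh (φ s - φ a) := by
  intro s1 hs1
  -- φ is monotone on [a,b]
  have hφc : ContinuousOn φ (Icc a b) := fun s hs => (hφd s hs).continuousAt.continuousWithinAt
  have hgc : ContinuousOn g (Icc a b) := fun s hs => (hgd s hs).continuousAt.continuousWithinAt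
  have hφmono : MonotoneOn φ (Icc a b) := by
    apply monotoneOn_of_deriv_nonneg (convex_Icc a b) hφc
    · intro x hx
      rw [interior_Icc] at hx
      exact ((hφd x (Ioo_subset_Icc_self hx)).differentiableAt).differentiableWithinAt
    · intro x hx
      rw [interior_Icc] at hx
      rw [(hφd x (Ioo_subset_Icc_self hx)).deriv]
      exact hk0 x (Ioo_subset_Icc_self hx)
  have hψ0 : 0 ≤ φ s1 - φ a := by
    have := hφmono (left_mem_Icc.2 hab) hs1 hs1.1
    linarith
  have hEpos : (0:ℝ) < Real.exp (φ s1 - φ a) := Real.exp_pos _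
  -- the epsilon claim
  have key : ∀ ε : ℝ, 0 < ε →
      g s1 + Real.sqrt (g s1 * g s1 - 1) ≤ (1 + ε) * Real.exp (φ s1 - φ a) := by
    intro ε hε
    have hsub : Icc a s1 ⊆ Icc a b := Icc_subset_Icc_right hs1.2
    set F : ℝ → ℝ := fun s =>
      (g s + Real.sqrt (g s * g s - 1 + ε * ε)) * Real.exp (φ a - φ s) with hF
    set Fd : ℝ → ℝ := fun x =>
      (gd x + (gd x * g x + g x * gd x) / (2 * Real.sqrt (g x * g x - 1 + ε * ε))) *
          Real.exp (φ a - φ x) +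
        (g x + Real.sqrt (g x * g x - 1 + ε * ε)) * (Real.exp (φ a - φ x) * (0 - k x)) with hFd
    have hargpos : ∀ x ∈ Icc a b, 0 < g x * g x - 1 + ε * ε := by
      intro x hx
      have := hg1 x hx
      nlinarith
    have hFderiv : ∀ x ∈ Icc a b, HasDerivAt F (Fd x) x := by
      intro x hx
      have h1 : HasDerivAt (fun s => g s * g s - 1 + ε * ε) (gd x * g x + g x * gd x) x :=
        (((hgd x hx).mul (hgd x hx)).sub_const 1).add_const (ε * ε)
      have hsq := h1.sqrt (ne_of_gt (hargpos x hx))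
      have hexp : HasDerivAt (fun s => Real.exp (φ a - φ s))
          (Real.exp (φ a - φ x) * (0 - k x)) x :=
        ((hasDerivAt_const x (φ a)).sub (hφd x hx)).exp
      exact ((hgd x hx).add hsq).mul hexp
    have hFd_nonpos : ∀ x ∈ Ioo a s1, Fd x ≤ 0 := by
      intro x hx
      have hxmem : x ∈ Icc a b := hsub (Ioo_subset_Icc_self hx)
      have hxIoo : x ∈ Ioo a b := ⟨hx.1, lt_of_lt_of_le hx.2 hs1.2⟩
      set r := Real.sqrt (g x * g x - 1 + ε * ε) with hrdef
      have hrpos : 0 < r := Real.sqrt_pos.2 (hargpos x hxmem)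
      have hr2 : r * r = g x * g x - 1 + ε * ε :=
        Real.mul_self_sqrt (le_of_lt (hargpos x hxmem))
      have hgx : 1 ≤ g x := hg1 x hxmem
      have hkx : 0 ≤ k x := hk0 x hxmem
      have hE : 0 < Real.exp (φ a - φ x) := Real.exp_pos _
      have hgdle : gd x ≤ k x * r := by
        have h := hbd x hxIoo
        nlinarith [sq_nonneg (k x * r - gd x), mul_nonneg hkx hrpos.le, hr2, sq_nonneg ε]
      have hsum : gd x + (gd x * g x + g x * gd x) / (2 * r) ≤ k x * (g x + r) := by
        have he : gd x + (gd x * g x + g x * gd x) / (2 * r) = (gd x * r + g x * gd x) / r := by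
          field_simp
          ring
        rw [he, div_le_iff₀ hrpos]
        nlinarith [hgdle, hrpos, hgx]
      have h2 : (g x + r) * (Real.exp (φ a - φ x) * (0 - k x)) =
          -((g x + r) * k x * Real.exp (φ a - φ x)) := by ring
      simp only [hFd]
      rw [h2]
      have h3 : (gd x + (gd x * g x + g x * gd x) / (2 * r)) * Real.exp (φ a - φ x) ≤
          (k x * (g x + r)) * Real.exp (φ a - φ x) :=
        mul_le_mul_of_nonneg_right hsum hE.le
      nlinarith [h3]
    have hFcont : ContinuousOn F (Icc a s1) := by
      apply ContinuousOn.mul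
      · apply ContinuousOn.add (hgc.mono hsub)
        exact Real.continuous_sqrt.comp_continuousOn
          ((((hgc.mono hsub).mul (hgc.mono hsub)).sub continuousOn_const).add continuousOn_const)
      · exact Real.continuous_exp.comp_continuousOn
          (continuousOn_const.sub (hφc.mono hsub))
    have hanti : AntitoneOn F (Icc a s1) := by
      apply antitoneOn_of_deriv_nonpos (convex_Icc a s1) hFcont
      · intro x hx
        rw [interior_Icc] at hx
        exact ((hFderiv x (hsub (Ioo_subset_Icc_self hx))).differentiableAt).differentiableWithinAt
      · intro x hx
        rw [interior_Icc] at hx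
        rw [(hFderiv x (hsub (Ioo_subset_Icc_self hx))).deriv]
        exact hFd_nonpos x hx
    have hFa : F a = 1 + ε := by
      simp only [hF, hga]
      rw [show (1:ℝ) * 1 - 1 + ε * ε = ε * ε by ring, Real.sqrt_mul_self hε.le]
      simp
    have hFle : F s1 ≤ 1 + ε := by
      rw [← hFa]
      exact hanti (left_mem_Icc.2 hs1.1) ⟨hs1.1, le_refl s1⟩ hs1.1
    -- unfold F s1
    have hr1 : Real.sqrt (g s1 * g s1 - 1) ≤ Real.sqrt (g s1 * g s1 - 1 + ε * ε) := by
      apply Real.sqrt_le_sqrt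
      nlinarith
    have hexps : Real.exp (φ a - φ s1) * Real.exp (φ s1 - φ a) = 1 := by
      rw [← Real.exp_add]
      norm_num
    have hFs1 : (g s1 + Real.sqrt (g s1 * g s1 - 1 + ε * ε)) * Real.exp (φ a - φ s1) ≤ 1 + ε :=
      hFle
    calc g s1 + Real.sqrt (g s1 * g s1 - 1)
        ≤ g s1 + Real.sqrt (g s1 * g s1 - 1 + ε * ε) := by linarith
      _ = ((g s1 + Real.sqrt (g s1 * g s1 - 1 + ε * ε)) * Real.exp (φ a - φ s1)) *
            Real.exp (φ s1 - φ a) := by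
          rw [mul_assoc, hexps, mul_one]
      _ ≤ (1 + ε) * Real.exp (φ s1 - φ a) :=
          mul_le_mul_of_nonneg_right hFs1 hEpos.le
  -- let ε → 0
  have hple : g s1 + Real.sqrt (g s1 * g s1 - 1) ≤ Real.exp (φ s1 - φ a) := by
    by_contra hcon
    push_neg at hcon
    obtain ⟨p, hp⟩ : ∃ p, g s1 + Real.sqrt (g s1 * g s1 - 1) = p := ⟨_, rfl⟩
    obtain ⟨E, hE⟩ : ∃ E, Real.exp (φ s1 - φ a) = E := ⟨_, rfl⟩
    rw [hp] at hcon key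
    rw [hE] at hcon key
    have hEp : (0:ℝ) < E := hE ▸ Real.exp_pos _
    have hε : (0:ℝ) < (p - E) / (2 * E) := div_pos (by linarith) (by linarith)
    have h5 := key _ hε
    have h2 : (1 + (p - E) / (2 * E)) * E = E + (p - E) / 2 := by
      field_simp
    rw [h2] at h5
    linarith
  -- conclude
  have hq0 : 0 ≤ Real.sqrt (g s1 * g s1 - 1) := Real.sqrt_nonneg _
  have hg1s : 1 ≤ g s1 := hg1 s1 hs1
  have hqq : Real.sqrt (g s1 * g s1 - 1) * Real.sqrt (g s1 * g s1 - 1) = g s1 * g s1 - 1 :=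
    Real.mul_self_sqrt (by nlinarith)
  rw [Real.cosh_eq]
  have hexps : Real.exp (φ s1 - φ a) * Real.exp (-(φ s1 - φ a)) = 1 := by
    rw [← Real.exp_add]; norm_num
  have hEpos2 : (0:ℝ) < Real.exp (-(φ s1 - φ a)) := Real.exp_pos _
  nlinarith [hple, hqq, hexps, hEpos, hEpos2, hq0, hg1s,
    mul_nonneg
      (by linarith : (0:ℝ) ≤ Real.exp (φ s1 - φ a) - g s1 - Real.sqrt (g s1 * g s1 - 1))
      (by linarith : (0:ℝ) ≤ Real.exp (φ s1 - φ a) - g s1 + Real.sqrt (g s1 * g s1 - 1))]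

open Set in
lemma gron_left (a b : ℝ) (g gd φ k : ℝ → ℝ) (hab : a ≤ b)
    (hg1 : ∀ s ∈ Icc a b, 1 ≤ g s)
    (hgd : ∀ s ∈ Icc a b, HasDerivAt g (gd s) s)
    (hφd : ∀ s ∈ Icc a b, HasDerivAt φ (k s) s)
    (hk0 : ∀ s ∈ Icc a b, 0 ≤ k s)
    (hbd : ∀ s ∈ Ioo a b, gd s ^ 2 ≤ k s ^ 2 * (g s ^ 2 - 1))
    (hgb : g b = 1) :
    ∀ s ∈ Icc a b, g s ≤ Real.cosh (φ s - φ b) := by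
  intro s hs
  have hmap : ∀ t : ℝ, t ∈ Icc a b → a + b - t ∈ Icc a b := by
    intro t ht; exact ⟨by linarith [ht.2], by linarith [ht.1]⟩
  have hmapo : ∀ t : ℝ, t ∈ Ioo a b → a + b - t ∈ Ioo a b := by
    intro t ht; exact ⟨by linarith [ht.2], by linarith [ht.1]⟩
  have hline : ∀ t : ℝ, HasDerivAt (fun u : ℝ => a + b - u) (-1 : ℝ) t := by
    intro t
    exact (hasDerivAt_id t).const_sub (a + b)
  have key := gron_right a b (fun t => g (a + b - t)) (fun t => -gd (a + b - t))
      (fun t => -φ (a + b - t)) (fun t => k (a + b - t)) hab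
      (fun t ht => hg1 _ (hmap t ht))
      (fun t ht => by
        have := ((hgd _ (hmap t ht)).comp t (hline t))
        simpa [Function.comp_def] using this.neg.neg)
      (fun t ht => by
        have := ((hφd _ (hmap t ht)).comp t (hline t)).neg
        simpa [Function.comp_def, Pi.neg_def] using this)
      (fun t ht => hk0 _ (hmap t ht))
      (fun t ht => by
        have h := hbd _ (hmapo t ht)
        simpa using h)
      (by simpa using hgb)
  have hmem : a + b - s ∈ Icc a b := hmap s hs
  have h := key (a + b - s) hmem
  rw [show a + b - (a + b - s) = s by ring, show a + b - a = b by ring] at h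
  rw [show -φ s - -φ b = -(φ s - φ b) by ring, Real.cosh_neg] at h
  exact h

/-- **Minkowski Schur theorem.**  Let `c` be a unit-speed time-like convex curve in the plane
`L²₁ = {x₃ = 0}` of `L³₁` with curvature `k ≥ 0`, and `ct` a unit-speed time-like curve in
`L³₁` with curvature `|kt s| ≤ k s`.  Then the Minkowski chord lengths satisfy
`|c L − c 0| ≥ |ct L − ct 0|`, where `|u| = √⟨u, u⟩` for a time-like vector `u`. -/
theorem minkowski_schur_chord
    (L : ℝ) (hL : 0 < L)
    (c : ℝ → Fin 3 → ℝ) (φ k : ℝ → ℝ) (T : ℝ → Fin 3 → ℝ)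
    (ct Tt Tt' : ℝ → Fin 3 → ℝ)
    (hplane : ∀ s, c s 2 = 0)
    (hT : ∀ s, T s = ![Real.cosh (φ s), Real.sinh (φ s), 0])
    (hc : ∀ s ∈ Set.Icc 0 L, HasDerivAt c (T s) s)
    (hφ : ∀ s ∈ Set.Icc 0 L, HasDerivAt φ (k s) s)
    (hk : ∀ s ∈ Set.Icc 0 L, 0 ≤ k s)
    (hct : ∀ s ∈ Set.Icc 0 L, HasDerivAt ct (Tt s) s)
    (hunitt : ∀ s ∈ Set.Icc 0 L, mink (Tt s) (Tt s) = 1)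
    (hfuture : ∀ s ∈ Set.Icc 0 L, 0 < Tt s 0)
    (hTt : ∀ s ∈ Set.Icc 0 L, HasDerivAt Tt (Tt' s) s)
    (hcomp : ∀ s ∈ Set.Icc 0 L, Real.sqrt (-(mink (Tt' s) (Tt' s))) ≤ k s) :
    Real.sqrt (mink (ct L - ct 0) (ct L - ct 0)) ≤
      Real.sqrt (mink (c L - c 0) (c L - c 0)) := by
  have huIcc : Set.uIcc (0:ℝ) L = Set.Icc 0 L := Set.uIcc_of_le hL.le
  -- continuity facts
  have hφc : ContinuousOn φ (Icc 0 L) := fun s hs => (hφ s hs).continuousAt.continuousWithinAt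
  have hTtc : ∀ i, ContinuousOn (fun s => Tt s i) (Icc 0 L) := fun i s hs =>
    (((continuous_apply i).continuousAt).comp (hTt s hs).continuousAt).continuousWithinAt
  -- basic integrability
  have hcoshint : IntervalIntegrable (fun s => Real.cosh (φ s)) MeasureTheory.volume 0 L := by
    apply ContinuousOn.intervalIntegrable
    rw [huIcc]
    exact Real.continuous_cosh.comp_continuousOn hφc
  have hsinhint : IntervalIntegrable (fun s => Real.sinh (φ s)) MeasureTheory.volume 0 L := by
    apply ContinuousOn.intervalIntegrable
    rw [huIcc]
    exact Real.continuous_sinh.comp_continuousOn hφc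
  obtain ⟨A, hA⟩ : ∃ A, (∫ s in (0:ℝ)..L, Real.cosh (φ s)) = A := ⟨_, rfl⟩
  obtain ⟨B, hB⟩ : ∃ B, (∫ s in (0:ℝ)..L, Real.sinh (φ s)) = B := ⟨_, rfl⟩
  -- chords of the plane curve via FTC
  have hTcont : ∀ i, ContinuousOn (fun s => T s i) (Icc 0 L) := by
    intro i
    fin_cases i
    · exact (Real.continuous_cosh.comp_continuousOn hφc).congr fun s _ => by rw [hT]; simp
    · exact (Real.continuous_sinh.comp_continuousOn hφc).congr fun s _ => by rw [hT]; simp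
    · exact (continuousOn_const (c := (0:ℝ))).congr fun s _ => by rw [hT]; simp
  have hchord_c : ∀ i, c L i - c 0 i = ∫ s in (0:ℝ)..L, T s i := by
    intro i
    symm
    apply integral_eq_sub_of_hasDerivAt
    · intro t ht
      rw [huIcc] at ht
      exact (hasDerivAt_pi.1 (hc t ht)) i
    · apply ContinuousOn.intervalIntegrable
      rw [huIcc]
      exact hTcont i
  have hcA : c L 0 - c 0 0 = A := by
    rw [hchord_c 0, ← hA]
    apply integral_congr
    intro s _
    show T s 0 = Real.cosh (φ s)
    rw [hT]
    simp
  have hcB : c L 1 - c 0 1 = B := by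
    rw [hchord_c 1, ← hB]
    apply integral_congr
    intro s _
    show T s 1 = Real.sinh (φ s)
    rw [hT]
    simp
  -- existence of s₀ where the tangent is parallel to the chord
  have hhint : IntervalIntegrable (fun s => A * Real.sinh (φ s) - B * Real.cosh (φ s))
      MeasureTheory.volume 0 L := (hsinhint.const_mul A).sub (hcoshint.const_mul B)
  have hzero : (∫ s in (0:ℝ)..L, (A * Real.sinh (φ s) - B * Real.cosh (φ s))) = 0 := by
    rw [integral_sub (hsinhint.const_mul A) (hcoshint.const_mul B),
      integral_const_mul, integral_const_mul, hA, hB]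
    ring
  have hex1 : ∃ s1 ∈ Icc (0:ℝ) L, A * Real.sinh (φ s1) - B * Real.cosh (φ s1) ≤ 0 := by
    by_contra hcon
    push_neg at hcon
    have hpos := intervalIntegral_pos_of_pos_on hhint
      (fun x hx => hcon x (Ioo_subset_Icc_self hx)) hL
    rw [hzero] at hpos
    exact lt_irrefl 0 hpos
  have hex2 : ∃ s2 ∈ Icc (0:ℝ) L, 0 ≤ A * Real.sinh (φ s2) - B * Real.cosh (φ s2) := by
    by_contra hcon
    push_neg at hcon
    have hpos := intervalIntegral_pos_of_pos_on (hhint.neg)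
      (fun x hx => by
        have := hcon x (Ioo_subset_Icc_self hx)
        simp only [Pi.neg_apply]
        linarith) hL
    simp only [Pi.neg_apply] at hpos
    rw [integral_neg, hzero] at hpos
    norm_num at hpos
  obtain ⟨s1, hs1m, hs1v⟩ := hex1
  obtain ⟨s2, hs2m, hs2v⟩ := hex2
  have hsub12 : Set.uIcc s1 s2 ⊆ Icc (0:ℝ) L := by
    rw [← huIcc]
    exact Set.uIcc_subset_uIcc (huIcc ▸ hs1m) (huIcc ▸ hs2m)
  have hconth : ContinuousOn (fun s => A * Real.sinh (φ s) - B * Real.cosh (φ s))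
      (Set.uIcc s1 s2) :=
    ((continuousOn_const.mul ((Real.continuous_sinh.comp_continuousOn (hφc.mono hsub12)))).sub
      (continuousOn_const.mul ((Real.continuous_cosh.comp_continuousOn (hφc.mono hsub12)))))
  have h0mem : (0:ℝ) ∈ Set.uIcc (A * Real.sinh (φ s1) - B * Real.cosh (φ s1))
      (A * Real.sinh (φ s2) - B * Real.cosh (φ s2)) := Set.mem_uIcc.2 (Or.inl ⟨hs1v, hs2v⟩)
  obtain ⟨s₀, hs₀m, hs₀⟩ := intermediate_value_uIcc hconth h0mem
  have hs₀Icc : s₀ ∈ Icc (0:ℝ) L := hsub12 hs₀m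
  -- orthogonality of Tt and Tt' in the interior
  have horth : ∀ s ∈ Ioo (0:ℝ) L, mink (Tt s) (Tt' s) = 0 := by
    intro s hs
    have hi := hasDerivAt_pi.1 (hTt s (Ioo_subset_Icc_self hs))
    have hq : HasDerivAt (fun t => Tt t 0 * Tt t 0 - Tt t 1 * Tt t 1 - Tt t 2 * Tt t 2)
        ((Tt' s 0 * Tt s 0 + Tt s 0 * Tt' s 0) - (Tt' s 1 * Tt s 1 + Tt s 1 * Tt' s 1)
          - (Tt' s 2 * Tt s 2 + Tt s 2 * Tt' s 2)) s :=
      (((hi 0).mul (hi 0)).sub ((hi 1).mul (hi 1))).sub ((hi 2).mul (hi 2))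
    have hev : (fun t => Tt t 0 * Tt t 0 - Tt t 1 * Tt t 1 - Tt t 2 * Tt t 2)
        =ᶠ[nhds s] fun _ => (1:ℝ) := by
      filter_upwards [Icc_mem_nhds hs.1 hs.2] with t ht
      have h1 := hunitt t ht
      simpa [mink] using h1
    have hq1 := hq.congr_of_eventuallyEq hev.symm
    have h0 := hq1.unique (hasDerivAt_const s 1)
    simp only [mink]
    linarith [h0]
  -- the derivative bound on the interior
  have hbd : ∀ s ∈ Ioo (0:ℝ) L, mink (Tt' s) (Tt s₀) ^ 2 ≤
      k s ^ 2 * (mink (Tt s) (Tt s₀) ^ 2 - 1) := by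
    intro s hs
    have hsI := Ioo_subset_Icc_self hs
    have ho := horth s hs
    have hu := hunitt s hsI
    have hv := hunitt s₀ hs₀Icc
    have hsp : mink (Tt' s) (Tt' s) ≤ 0 := mink_orth_spacelike (Tt s) (Tt' s) hu ho
    have hksq : -(mink (Tt' s) (Tt' s)) ≤ k s ^ 2 := by
      have h1 := hcomp s hsI
      have h2 : Real.sqrt (-(mink (Tt' s) (Tt' s))) ^ 2 = -(mink (Tt' s) (Tt' s)) :=
        Real.sq_sqrt (by linarith)
      nlinarith [Real.sqrt_nonneg (-(mink (Tt' s) (Tt' s)))]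
    have hz : mink (Tt s) (fun i => Tt s₀ i - mink (Tt s) (Tt s₀) * Tt s i) = 0 := by
      simp only [mink] at hu ⊢
      linear_combination (-(Tt s 0 * Tt s₀ 0 - Tt s 1 * Tt s₀ 1 - Tt s 2 * Tt s₀ 2)) * hu
    have hcs := mink_cs_plane (Tt s) (Tt' s)
      (fun i => Tt s₀ i - mink (Tt s) (Tt s₀) * Tt s i) hu ho hz
    have e1 : mink (Tt' s) (fun i => Tt s₀ i - mink (Tt s) (Tt s₀) * Tt s i)
        = mink (Tt' s) (Tt s₀) := by
      simp only [mink] at ho ⊢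
      linear_combination (-(Tt s 0 * Tt s₀ 0 - Tt s 1 * Tt s₀ 1 - Tt s 2 * Tt s₀ 2)) * ho
    have e2 : mink (fun i => Tt s₀ i - mink (Tt s) (Tt s₀) * Tt s i)
        (fun i => Tt s₀ i - mink (Tt s) (Tt s₀) * Tt s i)
        = 1 - mink (Tt s) (Tt s₀) ^ 2 := by
      simp only [mink] at hu hv ⊢
      linear_combination hv + (Tt s 0 * Tt s₀ 0 - Tt s 1 * Tt s₀ 1 - Tt s 2 * Tt s₀ 2)^2 * hu
    rw [e1, e2] at hcs
    have hγ : 1 ≤ mink (Tt s) (Tt s₀) :=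
      mink_unit_ge_one _ _ hu hv (hfuture s hsI) (hfuture s₀ hs₀Icc)
    nlinarith [hcs, hksq, hsp, hγ,
      mul_nonneg (by linarith : (0:ℝ) ≤ k s ^ 2 + mink (Tt' s) (Tt' s))
        (by nlinarith [hγ] : (0:ℝ) ≤ mink (Tt s) (Tt s₀) ^ 2 - 1)]
  -- derivative of g
  have hgderiv : ∀ s ∈ Icc (0:ℝ) L,
      HasDerivAt (fun t => mink (Tt t) (Tt s₀)) (mink (Tt' s) (Tt s₀)) s := by
    intro s hs
    have hi := hasDerivAt_pi.1 (hTt s hs)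
    exact
      (((hi 0).mul_const (Tt s₀ 0)).sub ((hi 1).mul_const (Tt s₀ 1))).sub
        ((hi 2).mul_const (Tt s₀ 2))
  have hg1 : ∀ s ∈ Icc (0:ℝ) L, 1 ≤ mink (Tt s) (Tt s₀) := fun s hs =>
    mink_unit_ge_one _ _ (hunitt s hs) (hunitt s₀ hs₀Icc) (hfuture s hs) (hfuture s₀ hs₀Icc)
  -- the pointwise comparison
  have hgbound : ∀ s ∈ Icc (0:ℝ) L, mink (Tt s) (Tt s₀) ≤ Real.cosh (φ s - φ s₀) := by
    intro s hs
    rcases le_total s₀ s with hle | hle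
    · have hsubI : Icc s₀ L ⊆ Icc 0 L := Icc_subset_Icc_left hs₀Icc.1
      have hsubO : Ioo s₀ L ⊆ Ioo 0 L := Ioo_subset_Ioo_left hs₀Icc.1
      exact gron_right s₀ L (fun t => mink (Tt t) (Tt s₀)) (fun t => mink (Tt' t) (Tt s₀)) φ k
        hs₀Icc.2 (fun t ht => hg1 t (hsubI ht)) (fun t ht => hgderiv t (hsubI ht))
        (fun t ht => hφ t (hsubI ht)) (fun t ht => hk t (hsubI ht))
        (fun t ht => hbd t (hsubO ht)) (hunitt s₀ hs₀Icc) s ⟨hle, hs.2⟩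
    · have hsubI : Icc (0:ℝ) s₀ ⊆ Icc 0 L := Icc_subset_Icc_right hs₀Icc.2
      have hsubO : Ioo (0:ℝ) s₀ ⊆ Ioo 0 L := Ioo_subset_Ioo_right hs₀Icc.2
      exact gron_left 0 s₀ (fun t => mink (Tt t) (Tt s₀)) (fun t => mink (Tt' t) (Tt s₀)) φ k
        hs₀Icc.1 (fun t ht => hg1 t (hsubI ht)) (fun t ht => hgderiv t (hsubI ht))
        (fun t ht => hφ t (hsubI ht)) (fun t ht => hk t (hsubI ht))
        (fun t ht => hbd t (hsubO ht)) (hunitt s₀ hs₀Icc) s ⟨hs.1, hle⟩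
  -- integral comparisons
  have hgcont : ContinuousOn (fun s => mink (Tt s) (Tt s₀)) (Icc 0 L) := by
    simp only [mink]
    exact (((hTtc 0).mul continuousOn_const).sub ((hTtc 1).mul continuousOn_const)).sub
      ((hTtc 2).mul continuousOn_const)
  have hgint : IntervalIntegrable (fun s => mink (Tt s) (Tt s₀)) MeasureTheory.volume 0 L := by
    apply ContinuousOn.intervalIntegrable
    rw [huIcc]
    exact hgcont
  have hcosh2int : IntervalIntegrable (fun s => Real.cosh (φ s - φ s₀))
      MeasureTheory.volume 0 L := by
    apply ContinuousOn.intervalIntegrable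
    rw [huIcc]
    exact Real.continuous_cosh.comp_continuousOn (hφc.sub continuousOn_const)
  have hIle : (∫ s in (0:ℝ)..L, mink (Tt s) (Tt s₀)) ≤
      ∫ s in (0:ℝ)..L, Real.cosh (φ s - φ s₀) :=
    integral_mono_on hL.le hgint hcosh2int hgbound
  have hgeL : L ≤ ∫ s in (0:ℝ)..L, mink (Tt s) (Tt s₀) := by
    have h1 : (∫ _ in (0:ℝ)..L, (1:ℝ)) ≤ ∫ s in (0:ℝ)..L, mink (Tt s) (Tt s₀) :=
      integral_mono_on hL.le intervalIntegrable_const hgint (fun x hx => hg1 x hx)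
    simpa using h1
  have hcoshval : (∫ s in (0:ℝ)..L, Real.cosh (φ s - φ s₀)) =
      A * Real.cosh (φ s₀) - B * Real.sinh (φ s₀) := by
    rw [integral_congr (g := fun s =>
      Real.cosh (φ s) * Real.cosh (φ s₀) - Real.sinh (φ s) * Real.sinh (φ s₀))
      (fun s _ => Real.cosh_sub _ _)]
    rw [integral_sub (hcoshint.mul_const _) (hsinhint.mul_const _),
      integral_mul_const, integral_mul_const, hA, hB]
  -- algebra for the plane chord
  have hs₀' : A * Real.sinh (φ s₀) - B * Real.cosh (φ s₀) = 0 := hs₀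
  have hcsq := Real.cosh_sq_sub_sinh_sq (φ s₀)
  have hApos : 0 < A := by
    rw [← hA]
    exact intervalIntegral_pos_of_pos_on hcoshint (fun x _ => Real.cosh_pos _) hL
  have hCA : (A * Real.cosh (φ s₀) - B * Real.sinh (φ s₀)) * Real.cosh (φ s₀) = A := by
    linear_combination Real.sinh (φ s₀) * hs₀' + A * hcsq
  have hCB : (A * Real.cosh (φ s₀) - B * Real.sinh (φ s₀)) * Real.sinh (φ s₀) = B := by
    linear_combination Real.cosh (φ s₀) * hs₀' + B * hcsq
  have hCpos : 0 < A * Real.cosh (φ s₀) - B * Real.sinh (φ s₀) := by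
    nlinarith [hCA, hApos, Real.cosh_pos (φ s₀)]
  have hABC : A * A - B * B = (A * Real.cosh (φ s₀) - B * Real.sinh (φ s₀)) ^ 2 := by
    linear_combination
      (-(A + (A * Real.cosh (φ s₀) - B * Real.sinh (φ s₀)) * Real.cosh (φ s₀))) * hCA +
      (B + (A * Real.cosh (φ s₀) - B * Real.sinh (φ s₀)) * Real.sinh (φ s₀)) * hCB +
      (A * Real.cosh (φ s₀) - B * Real.sinh (φ s₀)) ^ 2 * hcsq
  have hmc : mink (c L - c 0) (c L - c 0) =
      (A * Real.cosh (φ s₀) - B * Real.sinh (φ s₀)) ^ 2 := by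
    simp only [mink, Pi.sub_apply]
    rw [hcA, hcB, hplane L, hplane 0, ← hABC]
    ring
  -- chord of the space curve
  have hTtint : ∀ i, IntervalIntegrable (fun s => Tt s i) MeasureTheory.volume 0 L := by
    intro i
    apply ContinuousOn.intervalIntegrable
    rw [huIcc]
    exact hTtc i
  have hchord_t : ∀ i, ct L i - ct 0 i = ∫ s in (0:ℝ)..L, Tt s i := by
    intro i
    symm
    apply integral_eq_sub_of_hasDerivAt
    · intro t ht
      rw [huIcc] at ht
      exact (hasDerivAt_pi.1 (hct t ht)) i
    · exact hTtint i
  have hmtv : mink (ct L - ct 0) (Tt s₀) = ∫ s in (0:ℝ)..L, mink (Tt s) (Tt s₀) := by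
    simp only [mink, Pi.sub_apply]
    rw [hchord_t 0, hchord_t 1, hchord_t 2]
    rw [integral_sub (((hTtint 0).mul_const _).sub ((hTtint 1).mul_const _))
      ((hTtint 2).mul_const _),
      integral_sub ((hTtint 0).mul_const _) ((hTtint 1).mul_const _),
      integral_mul_const, integral_mul_const, integral_mul_const]
  have hIgpos : 0 < ∫ s in (0:ℝ)..L, mink (Tt s) (Tt s₀) := lt_of_lt_of_le hL hgeL
  have hrev : mink (ct L - ct 0) (ct L - ct 0) ≤ mink (ct L - ct 0) (Tt s₀) ^ 2 :=
    mink_rev_cs _ _ (hunitt s₀ hs₀Icc)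
  calc Real.sqrt (mink (ct L - ct 0) (ct L - ct 0))
      ≤ Real.sqrt (mink (ct L - ct 0) (Tt s₀) ^ 2) := Real.sqrt_le_sqrt hrev
    _ = |mink (ct L - ct 0) (Tt s₀)| := Real.sqrt_sq_eq_abs _
    _ = mink (ct L - ct 0) (Tt s₀) := abs_of_pos (by rw [hmtv]; exact hIgpos)
    _ = ∫ s in (0:ℝ)..L, mink (Tt s) (Tt s₀) := hmtv
    _ ≤ ∫ s in (0:ℝ)..L, Real.cosh (φ s - φ s₀) := hIle
    _ = A * Real.cosh (φ s₀) - B * Real.sinh (φ s₀) := hcoshval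
    _ = Real.sqrt ((A * Real.cosh (φ s₀) - B * Real.sinh (φ s₀)) ^ 2) :=
        (Real.sqrt_sq hCpos.le).symm
    _ = Real.sqrt (mink (c L - c 0) (c L - c 0)) := by rw [hmc]
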